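/- Let φ : [0,∞) → ℂ² be smooth with φ and all its derivatives decaying faster than any polynomial at infinity (Schwartz class on the half-line). Then ∫₀^∞ ‖−iσ₂φ'(t) + tσ₁φ(t)‖²_{ℂ²} dt = ∫₀^∞ ‖φ'(t)‖²_{ℂ²} dt + ∫₀^∞ t²‖φ(t)‖²_{ℂ²} dt − ∫₀^∞ ⟨φ(t), σ₃φ(t)⟩_{ℂ²} dt, where ⟨φ, σ₃φ⟩_{ℂ²} = |φ₁|² − |φ₂|². -/

import Mathlib

/-!
Expanding the square gives `‖c φ' + t φ‖² = c²‖φ'‖² + t²‖φ‖² + c t (‖φ‖²)'`. Integrating the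
cross term by parts over `(0, ∞)`, the boundary term `t ‖φ t‖²` vanishes at both ends, leaving
`-c ∫ ‖φ‖²`. The Dirac operator acts as `c = -1` on `φ₂` and `c = 1` on `φ₁`, which produces the
`σ₃` term. Rapid decay makes every integrand `O((1 + t²)⁻¹)`, hence integrable.
-/

open MeasureTheory Complex
open Set Filter Topology
open scoped RealInnerProductSpace

def HalfLineRapidDecay {E : Type*} [NormedAddCommGroup E] (u : ℝ → E) : Prop :=
  ∀ k : ℕ, ∃ C : ℝ, ∀ t : ℝ, 0 ≤ t → |t| ^ k * ‖u t‖ ≤ C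

namespace HalfLineRapidDecay

variable {E F : Type*} [NormedAddCommGroup E] [NormedAddCommGroup F] {u v : ℝ → E}

theorem mono (hu : HalfLineRapidDecay u) {w : ℝ → F} (hwu : ∀ t, 0 ≤ t → ‖w t‖ ≤ ‖u t‖) :
    HalfLineRapidDecay w := fun k ↦ by
  obtain ⟨C, hC⟩ := hu k
  exact ⟨C, fun t ht ↦ (mul_le_mul_of_nonneg_left (hwu t ht) (by positivity)).trans (hC t ht)⟩

theorem add (hu : HalfLineRapidDecay u) (hv : HalfLineRapidDecay v) :
    HalfLineRapidDecay (fun t ↦ u t + v t) := fun k ↦ by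
  obtain ⟨C, hC⟩ := hu k
  obtain ⟨D, hD⟩ := hv k
  refine ⟨C + D, fun t ht ↦ ?_⟩
  calc |t| ^ k * ‖u t + v t‖ ≤ |t| ^ k * ‖u t‖ + |t| ^ k * ‖v t‖ := by
        rw [← mul_add]; gcongr; exact norm_add_le _ _
    _ ≤ C + D := add_le_add (hC t ht) (hD t ht)

theorem const_smul [NormedSpace ℝ E] (hu : HalfLineRapidDecay u) (c : ℝ) :
    HalfLineRapidDecay (fun t ↦ c • u t) := fun k ↦ by
  obtain ⟨C, hC⟩ := hu k
  refine ⟨|c| * C, fun t ht ↦ ?_⟩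
  rw [norm_smul, Real.norm_eq_abs, mul_left_comm]
  exact mul_le_mul_of_nonneg_left (hC t ht) (abs_nonneg c)

theorem pow_smul [NormedSpace ℝ E] (hu : HalfLineRapidDecay u) (j : ℕ) :
    HalfLineRapidDecay (fun t ↦ t ^ j • u t) := fun k ↦ by
  obtain ⟨C, hC⟩ := hu (k + j)
  refine ⟨C, fun t ht ↦ ?_⟩
  rw [norm_smul, norm_pow, Real.norm_eq_abs, ← mul_assoc, ← pow_add]
  exact hC t ht

theorem norm_mul_norm {v : ℝ → F} (hu : HalfLineRapidDecay u) (hv : HalfLineRapidDecay v) :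
    HalfLineRapidDecay (fun t ↦ ‖u t‖ * ‖v t‖) := fun k ↦ by
  obtain ⟨C, hC⟩ := hu k
  obtain ⟨D, hD⟩ := hv 0
  refine ⟨C * D, fun t ht ↦ ?_⟩
  have hvD : ‖v t‖ ≤ D := by simpa using hD t ht
  have hC0 : 0 ≤ C := (by positivity : 0 ≤ |t| ^ k * ‖u t‖).trans (hC t ht)
  rw [norm_mul, norm_norm, norm_norm, ← mul_assoc]
  exact mul_le_mul (hC t ht) hvD (norm_nonneg _) hC0

theorem norm_sq (hu : HalfLineRapidDecay u) : HalfLineRapidDecay (fun t ↦ ‖u t‖ ^ 2) :=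
  (hu.norm_mul_norm hu).mono fun t _ ↦ by rw [sq]

theorem inner [InnerProductSpace ℝ E] (hu : HalfLineRapidDecay u) (hv : HalfLineRapidDecay v) :
    HalfLineRapidDecay (fun t ↦ ⟪u t, v t⟫) :=
  (hu.norm_mul_norm hv).mono fun t _ ↦ by
    rw [Real.norm_eq_abs, norm_mul, norm_norm, norm_norm]
    exact abs_real_inner_le_norm _ _

theorem integrableOn_Ioi (hu : HalfLineRapidDecay u) (hcont : Continuous u) :
    IntegrableOn u (Ioi 0) := by
  obtain ⟨C₀, hC₀⟩ := hu 0
  obtain ⟨C₂, hC₂⟩ := hu 2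
  refine ((integrable_inv_one_add_sq.const_mul (C₀ + C₂)).integrableOn).mono'
    hcont.aestronglyMeasurable.restrict ?_
  filter_upwards [ae_restrict_mem measurableSet_Ioi] with t ht
  have hbound : (1 + t ^ 2) * ‖u t‖ ≤ C₀ + C₂ := by
    have h₀ := hC₀ t ht.le
    have h₂ := hC₂ t ht.le
    rw [sq_abs] at h₂
    rw [pow_zero, one_mul] at h₀
    linarith
  rw [← div_eq_mul_inv, le_div_iff₀ (by positivity), mul_comm]
  exact hbound

theorem tendsto_atTop_zero (hu : HalfLineRapidDecay u) : Tendsto u atTop (𝓝 0) := by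
  obtain ⟨C, hC⟩ := hu 1
  refine squeeze_zero_norm' ?_ (by simpa using tendsto_inv_atTop_zero.const_mul C)
  filter_upwards [eventually_gt_atTop 0] with t ht
  rw [← div_eq_mul_inv, le_div_iff₀ ht, mul_comm]
  simpa [abs_of_pos ht] using hC t ht.le

end HalfLineRapidDecay

theorem integral_Ioi_mul_deriv_eq_neg_integral {g g' : ℝ → ℝ}
    (hg : ∀ t, HasDerivAt g (g' t) t) (hgi : IntegrableOn g (Ioi 0))
    (hg'i : IntegrableOn (fun t ↦ t * g' t) (Ioi 0))
    (hlim : Tendsto (fun t ↦ t * g t) atTop (𝓝 0)) :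
    ∫ t in Ioi 0, t * g' t = -∫ t in Ioi 0, g t := by
  have hgc : Continuous g := continuous_iff_continuousAt.2 fun t ↦ (hg t).continuousAt
  have hzero : Tendsto (fun t ↦ t * g t) (𝓝[>] 0) (𝓝 0) :=
    ((by fun_prop : Continuous fun t ↦ t * g t).tendsto' 0 0 (zero_mul _)).mono_left
      nhdsWithin_le_nhds
  simpa using integral_Ioi_mul_deriv_eq_deriv_mul (u := id) (u' := 1)
    (fun t _ ↦ hasDerivAt_id t) (fun t _ ↦ hg t) hg'i (by simpa using hgi) hzero hlim

section EnergyIdentity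

variable {E : Type*} [NormedAddCommGroup E] [InnerProductSpace ℝ E] {f : ℝ → E}

theorem integrableOn_Ioi_energy_densities (hf : ContDiff ℝ 1 f) (hdf : HalfLineRapidDecay f)
    (hdf' : HalfLineRapidDecay (deriv f)) (c : ℝ) :
    IntegrableOn (fun t ↦ ‖c • deriv f t + t • f t‖ ^ 2) (Ioi 0) ∧
      IntegrableOn (fun t ↦ ‖deriv f t‖ ^ 2) (Ioi 0) ∧
      IntegrableOn (fun t ↦ t ^ 2 * ‖f t‖ ^ 2) (Ioi 0) ∧
      IntegrableOn (fun t ↦ ‖f t‖ ^ 2) (Ioi 0) := by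
  have hc : Continuous f := hf.continuous
  have hc' : Continuous (deriv f) := hf.continuous_deriv le_rfl
  refine ⟨?_, hdf'.norm_sq.integrableOn_Ioi (by fun_prop),
    (hdf.norm_sq.pow_smul 2).integrableOn_Ioi (by fun_prop),
    hdf.norm_sq.integrableOn_Ioi (by fun_prop)⟩
  simpa using ((hdf'.const_smul c).add (hdf.pow_smul 1)).norm_sq.integrableOn_Ioi (by fun_prop)

theorem integral_norm_smul_deriv_add_smul_sq (hf : ContDiff ℝ 1 f) (hdf : HalfLineRapidDecay f)
    (hdf' : HalfLineRapidDecay (deriv f)) (c : ℝ) :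
    ∫ t in Ioi 0, ‖c • deriv f t + t • f t‖ ^ 2 =
      c ^ 2 * (∫ t in Ioi 0, ‖deriv f t‖ ^ 2) + (∫ t in Ioi 0, t ^ 2 * ‖f t‖ ^ 2)
        - c * ∫ t in Ioi 0, ‖f t‖ ^ 2 := by
  obtain ⟨-, hint_deriv, hint_weighted, hint_sq⟩ :=
    integrableOn_Ioi_energy_densities hf hdf hdf' c
  have hderiv (t : ℝ) : HasDerivAt f (deriv f t) t :=
    (hf.differentiable one_ne_zero t).hasDerivAt
  have hint_cross : IntegrableOn (fun t ↦ t * (2 * ⟪f t, deriv f t⟫)) (Ioi 0) := by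
    have hc : Continuous f := hf.continuous
    have hc' : Continuous (deriv f) := hf.continuous_deriv le_rfl
    simpa using (((hdf.inner hdf').const_smul 2).pow_smul 1).integrableOn_Ioi (by fun_prop)
  have hparts : ∫ t in Ioi 0, t * (2 * ⟪f t, deriv f t⟫) = -∫ t in Ioi 0, ‖f t‖ ^ 2 :=
    integral_Ioi_mul_deriv_eq_neg_integral (fun t ↦ (hderiv t).norm_sq) hint_sq hint_cross
      (by simpa using (hdf.norm_sq.pow_smul 1).tendsto_atTop_zero)
  have expand (t : ℝ) : ‖c • deriv f t + t • f t‖ ^ 2 =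
      c ^ 2 * ‖deriv f t‖ ^ 2 + t ^ 2 * ‖f t‖ ^ 2 + c * (t * (2 * ⟪f t, deriv f t⟫)) := by
    rw [norm_add_sq_real, norm_smul, norm_smul, real_inner_smul_left, real_inner_smul_right,
      real_inner_comm, Real.norm_eq_abs, Real.norm_eq_abs, mul_pow, mul_pow, sq_abs, sq_abs]
    ring
  simp_rw [expand]
  rw [integral_add (f := fun t ↦ c ^ 2 * ‖deriv f t‖ ^ 2 + t ^ 2 * ‖f t‖ ^ 2)
      ((hint_deriv.const_mul _).add hint_weighted) (hint_cross.const_mul c),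
    integral_add (hint_deriv.const_mul _) hint_weighted, integral_const_mul, integral_const_mul,
    hparts]
  ring

end EnergyIdentity

theorem half_line_dirac_energy_identity
    (φ₁ φ₂ : ℝ → ℂ) (hφ₁ : ContDiff ℝ (⊤ : ℕ∞) φ₁) (hφ₂ : ContDiff ℝ (⊤ : ℕ∞) φ₂)
    (hdecay : ∀ n k : ℕ, ∃ C : ℝ, ∀ t : ℝ, 0 ≤ t →
      |t| ^ k * ‖iteratedDeriv n φ₁ t‖ ≤ C ∧ |t| ^ k * ‖iteratedDeriv n φ₂ t‖ ≤ C) :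
    (∫ t in Set.Ioi (0 : ℝ),
        (‖-(deriv φ₂ t) + (t : ℂ) * φ₂ t‖ ^ 2 + ‖deriv φ₁ t + (t : ℂ) * φ₁ t‖ ^ 2))
      = (∫ t in Set.Ioi (0 : ℝ), (‖deriv φ₁ t‖ ^ 2 + ‖deriv φ₂ t‖ ^ 2))
        + (∫ t in Set.Ioi (0 : ℝ), t ^ 2 * (‖φ₁ t‖ ^ 2 + ‖φ₂ t‖ ^ 2))
        - ∫ t in Set.Ioi (0 : ℝ), (‖φ₁ t‖ ^ 2 - ‖φ₂ t‖ ^ 2) := by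
  have hdecay₁ (n : ℕ) : HalfLineRapidDecay (iteratedDeriv n φ₁) :=
    fun k ↦ (hdecay n k).imp fun _ h t ht ↦ (h t ht).1
  have hdecay₂ (n : ℕ) : HalfLineRapidDecay (iteratedDeriv n φ₂) :=
    fun k ↦ (hdecay n k).imp fun _ h t ht ↦ (h t ht).2
  have d₁ : HalfLineRapidDecay φ₁ := iteratedDeriv_zero (f := φ₁) ▸ hdecay₁ 0
  have d₁' : HalfLineRapidDecay (deriv φ₁) := iteratedDeriv_one (f := φ₁) ▸ hdecay₁ 1
  have d₂ : HalfLineRapidDecay φ₂ := iteratedDeriv_zero (f := φ₂) ▸ hdecay₂ 0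
  have d₂' : HalfLineRapidDecay (deriv φ₂) := iteratedDeriv_one (f := φ₂) ▸ hdecay₂ 1
  have hC₁ : ContDiff ℝ 1 φ₁ := hφ₁.of_le (by exact_mod_cast le_top)
  have hC₂ : ContDiff ℝ 1 φ₂ := hφ₂.of_le (by exact_mod_cast le_top)
  obtain ⟨hdirac₁, hderiv₁, hweight₁, hmass₁⟩ := integrableOn_Ioi_energy_densities hC₁ d₁ d₁' 1
  obtain ⟨hdirac₂, hderiv₂, hweight₂, hmass₂⟩ := integrableOn_Ioi_energy_densities hC₂ d₂ d₂' (-1)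
  have e₁ := integral_norm_smul_deriv_add_smul_sq hC₁ d₁ d₁' 1
  have e₂ := integral_norm_smul_deriv_add_smul_sq hC₂ d₂ d₂' (-1)
  simp only [one_smul, neg_smul, Complex.real_smul] at hdirac₁ hdirac₂ e₁ e₂
  simp_rw [mul_add]
  rw [integral_add hdirac₂ hdirac₁, e₁, e₂, integral_add hderiv₁ hderiv₂,
    integral_add hweight₁ hweight₂, integral_sub hmass₁ hmass₂]
  ring
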